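/- arXiv:0710.2316 — 4 statements merged into one kernel-verified Lean document; each statement's English description precedes it below -/
import Mathlib

section
/- Let f : ℝⁿ → ℝ be Lipschitz continuous and let g : ℝⁿ → ℝ be (Lebesgue) measurable and essentially bounded. Then (J_ε f) · (J_ε g) − J_ε(f g) → 0 as ε → 0, uniformly on every compact subset of ℝⁿ. -/
open Set MeasureTheory Metric Filter

/-- The Friedrichs mollifier `J_ε g = g * χ_ε`, where `χ_ε(x) = ε^{-n} χ(x/ε)`. -/
noncomputable def friedrichsMollifier {n : ℕ} {F : Type*} [NormedAddCommGroup F]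
    [NormedSpace ℝ F] (χ : EuclideanSpace ℝ (Fin n) → ℝ) (ε : ℝ)
    (g : EuclideanSpace ℝ (Fin n) → F) (x : EuclideanSpace ℝ (Fin n)) : F :=
  ∫ y, ((ε ^ n)⁻¹ * χ (ε⁻¹ • (x - y))) • g y

section aux

variable {n : ℕ} (χ : EuclideanSpace ℝ (Fin n) → ℝ)

/-- The rescaled translated kernel. -/
noncomputable def mollKernel (ε : ℝ) (x y : EuclideanSpace ℝ (Fin n)) : ℝ :=
  (ε ^ n)⁻¹ * χ (ε⁻¹ • (x - y))

lemma mollKernel_cont (hχ : Continuous χ) (ε : ℝ) (x : EuclideanSpace ℝ (Fin n)) :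
    Continuous (fun y => mollKernel χ ε x y) := by
  unfold mollKernel
  fun_prop

lemma mollKernel_nonneg (hχ : ∀ x, 0 ≤ χ x) {ε : ℝ} (hε : 0 ≤ ε)
    (x y : EuclideanSpace ℝ (Fin n)) : 0 ≤ mollKernel χ ε x y :=
  mul_nonneg (inv_nonneg.2 (pow_nonneg hε n)) (hχ _)

lemma mollKernel_supp (hχ_supp : tsupport χ ⊆ closedBall 0 1) {ε : ℝ} (hε : 0 < ε)
    {x y : EuclideanSpace ℝ (Fin n)} (h : mollKernel χ ε x y ≠ 0) : dist y x ≤ ε := by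
  have hne : χ (ε⁻¹ • (x - y)) ≠ 0 := by
    intro h0; apply h; unfold mollKernel; rw [h0, mul_zero]
  have hmem : ε⁻¹ • (x - y) ∈ tsupport χ := subset_tsupport χ hne
  have := hχ_supp hmem
  rw [mem_closedBall_zero_iff, norm_smul, norm_inv, Real.norm_eq_abs,
    abs_of_pos hε] at this
  rw [dist_eq_norm, ← norm_neg, neg_sub]
  calc ‖x - y‖ = ε * (ε⁻¹ * ‖x - y‖) := by field_simp
  _ ≤ ε * 1 := by
      apply mul_le_mul_of_nonneg_left this hε.le
  _ = ε := mul_one ε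

lemma mollKernel_hcs (hχ_supp : tsupport χ ⊆ closedBall 0 1) {ε : ℝ} (hε : 0 < ε)
    (x : EuclideanSpace ℝ (Fin n)) : HasCompactSupport (fun y => mollKernel χ ε x y) :=
  HasCompactSupport.intro (isCompact_closedBall x ε) (fun y hy => by
    by_contra h0
    exact hy (mem_closedBall.2 (mollKernel_supp χ hχ_supp hε h0)))

lemma mollKernel_integrable (hχ : Continuous χ) (hχ_supp : tsupport χ ⊆ closedBall 0 1)
    {ε : ℝ} (hε : 0 < ε) (x : EuclideanSpace ℝ (Fin n)) :
    Integrable (fun y => mollKernel χ ε x y) :=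
  (mollKernel_cont χ hχ ε x).integrable_of_hasCompactSupport (mollKernel_hcs χ hχ_supp hε x)

lemma mollKernel_integral (hχ_int : ∫ x, χ x = 1) {ε : ℝ} (hε : 0 < ε)
    (x : EuclideanSpace ℝ (Fin n)) : ∫ y, mollKernel χ ε x y = 1 := by
  unfold mollKernel
  rw [MeasureTheory.integral_sub_left_eq_self
    (fun y => (ε ^ n)⁻¹ * χ (ε⁻¹ • y)) volume x]
  rw [MeasureTheory.integral_const_mul]
  rw [MeasureTheory.Measure.integral_comp_inv_smul_of_nonneg volume χ hε.le]
  rw [finrank_euclideanSpace_fin, hχ_int, smul_eq_mul, mul_one]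
  field_simp

end aux

/-- **Estimate (2.14).** If `f : ℝⁿ → ℝ` is Lipschitz and `g : ℝⁿ → ℝ` is measurable and
essentially bounded, then `(J_ε f) · (J_ε g) − J_ε (f g) → 0` as `ε → 0⁺`, uniformly on
every compact subset of `ℝⁿ`. -/
theorem stmt_4 {n : ℕ}
    (χ : EuclideanSpace ℝ (Fin n) → ℝ) (hχ_smooth : ContDiff ℝ (⊤ : ℕ∞) χ)
    (hχ_supp : tsupport χ ⊆ closedBall 0 1) (hχ_cpt : HasCompactSupport χ)
    (hχ_nonneg : ∀ x, 0 ≤ χ x) (hχ_int : ∫ x, χ x = 1)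
    (f : EuclideanSpace ℝ (Fin n) → ℝ) (Lf : NNReal) (hf : LipschitzWith Lf f)
    (g : EuclideanSpace ℝ (Fin n) → ℝ) (hg_meas : Measurable g)
    (hg_bd : ∃ M : ℝ, ∀ᵐ x ∂(volume : Measure (EuclideanSpace ℝ (Fin n))), |g x| ≤ M) :
    ∀ K : Set (EuclideanSpace ℝ (Fin n)), IsCompact K →
      TendstoUniformlyOn
        (fun (ε : ℝ) (x : EuclideanSpace ℝ (Fin n)) =>
          friedrichsMollifier χ ε f x * friedrichsMollifier χ ε g x
            - friedrichsMollifier χ ε (fun y => f y * g y) x)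
        0 (nhdsWithin 0 (Ioi 0)) K := by
  intro K _hK
  obtain ⟨M, hM⟩ := hg_bd
  set M0 : ℝ := max M 0 with hM0def
  have hM0 : 0 ≤ M0 := le_max_right _ _
  have hgM0 : ∀ᵐ y ∂(volume : Measure (EuclideanSpace ℝ (Fin n))), |g y| ≤ M0 :=
    hM.mono (fun y hy => hy.trans (le_max_left _ _))
  have hχc : Continuous χ := hχ_smooth.continuous
  -- key estimate
  have key : ∀ ε : ℝ, 0 < ε → ∀ x : EuclideanSpace ℝ (Fin n),
      |friedrichsMollifier χ ε f x * friedrichsMollifier χ ε g x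
        - friedrichsMollifier χ ε (fun y => f y * g y) x| ≤ 2 * Lf * M0 * ε := by
    intro ε hε x
    set φ : EuclideanSpace ℝ (Fin n) → ℝ := fun y => mollKernel χ ε x y with hφdef
    have hφc : Continuous φ := mollKernel_cont χ hχc ε x
    have hφ0 : ∀ y, 0 ≤ φ y := mollKernel_nonneg χ hχ_nonneg hε.le x
    have hφsupp : ∀ y, φ y ≠ 0 → dist y x ≤ ε := fun y => mollKernel_supp χ hχ_supp hε
    have hφhcs : HasCompactSupport φ := mollKernel_hcs χ hχ_supp hε x
    have hφint : Integrable φ := mollKernel_integrable χ hχc hχ_supp hε x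
    have hφone : ∫ y, φ y = 1 := mollKernel_integral χ hχ_int hε x
    -- rewrite mollifiers in terms of φ
    have hJf : friedrichsMollifier χ ε f x = ∫ y, φ y * f y := rfl
    have hJg : friedrichsMollifier χ ε g x = ∫ y, φ y * g y := rfl
    have hJfg : friedrichsMollifier χ ε (fun y => f y * g y) x
        = ∫ y, φ y * (f y * g y) := rfl
    -- integrabilities
    have hIf : Integrable (fun y => φ y * f y) :=
      (hφc.mul (hf.continuous)).integrable_of_hasCompactSupport (hφhcs.mul_right)
    have hIg : Integrable (fun y => φ y * g y) := by
      refine Integrable.mono' (hφint.mul_const M0)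
        (hφc.aestronglyMeasurable.mul hg_meas.aestronglyMeasurable) ?_
      filter_upwards [hgM0] with y hy
      rw [Real.norm_eq_abs, abs_mul, abs_of_nonneg (hφ0 y)]
      exact mul_le_mul_of_nonneg_left hy (hφ0 y)
    have hIfg : Integrable (fun y => φ y * (f y * g y)) := by
      refine Integrable.mono' (hφint.mul_const ((|f x| + Lf * ε) * M0))
        (hφc.aestronglyMeasurable.mul
          (hf.continuous.measurable.mul hg_meas).aestronglyMeasurable) ?_
      filter_upwards [hgM0] with y hy
      rw [Real.norm_eq_abs, abs_mul, abs_of_nonneg (hφ0 y), abs_mul]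
      by_cases h0 : φ y = 0
      · rw [h0, zero_mul, zero_mul]
      · have hd : dist y x ≤ ε := hφsupp y h0
        have hfy : |f y| ≤ |f x| + Lf * ε := by
          have := hf.dist_le_mul y x
          calc |f y| ≤ |f x| + |f y - f x| := by
                have := abs_sub_abs_le_abs_sub (f y) (f x); linarith
          _ ≤ |f x| + Lf * ε := by
                have h2 : |f y - f x| ≤ Lf * ε := by
                  calc |f y - f x| = dist (f y) (f x) := (Real.dist_eq _ _).symm
                  _ ≤ Lf * dist y x := hf.dist_le_mul y x
                  _ ≤ Lf * ε := by
                      exact mul_le_mul_of_nonneg_left hd (Lf.coe_nonneg)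
                linarith
        apply mul_le_mul_of_nonneg_left _ (hφ0 y)
        exact mul_le_mul hfy hy (abs_nonneg _) (by positivity)
    -- inner estimate: |J_ε f x - f y| ≤ 2 Lf ε when φ y ≠ 0
    have inner : ∀ y, φ y ≠ 0 → |(∫ z, φ z * f z) - f y| ≤ 2 * Lf * ε := by
      intro y hy
      have hdy : dist y x ≤ ε := hφsupp y hy
      have hconst : (f y : ℝ) = ∫ z, φ z * f y := by
        rw [MeasureTheory.integral_mul_const, hφone, one_mul]
      rw [hconst, ← MeasureTheory.integral_sub hIf (hφint.mul_const (f y))]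
      have : ∀ z, φ z * f z - φ z * f y = φ z * (f z - f y) := fun z => by ring
      simp_rw [this]
      have := MeasureTheory.norm_integral_le_of_norm_le
        (f := fun z => φ z * (f z - f y)) (g := fun z => φ z * (2 * Lf * ε))
        (hφint.mul_const _) ?_
      · rw [Real.norm_eq_abs] at this
        refine this.trans ?_
        rw [MeasureTheory.integral_mul_const, hφone, one_mul]
      · filter_upwards with z
        rw [Real.norm_eq_abs, abs_mul, abs_of_nonneg (hφ0 z)]
        by_cases h0 : φ z = 0
        · rw [h0, zero_mul, zero_mul]
        · have hdz : dist z x ≤ ε := hφsupp z h0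
          apply mul_le_mul_of_nonneg_left _ (hφ0 z)
          calc |f z - f y| = dist (f z) (f y) := (Real.dist_eq _ _).symm
          _ ≤ Lf * dist z y := hf.dist_le_mul z y
          _ ≤ Lf * (2 * ε) := by
              apply mul_le_mul_of_nonneg_left _ (Lf.coe_nonneg)
              calc dist z y ≤ dist z x + dist y x := dist_triangle_right z y x
              _ ≤ 2 * ε := by linarith
          _ = 2 * Lf * ε := by ring
    -- put everything together
    rw [hJf, hJg, hJfg]
    have hprod : (∫ y, φ y * f y) * (∫ y, φ y * g y)
        = ∫ y, (∫ z, φ z * f z) * (φ y * g y) := by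
      rw [MeasureTheory.integral_const_mul]
    rw [hprod, ← MeasureTheory.integral_sub (hIg.const_mul _) hIfg]
    have hrw : ∀ y, (∫ z, φ z * f z) * (φ y * g y) - φ y * (f y * g y)
        = φ y * g y * ((∫ z, φ z * f z) - f y) := fun y => by ring
    simp_rw [hrw]
    have hbd := MeasureTheory.norm_integral_le_of_norm_le
      (f := fun y => φ y * g y * ((∫ z, φ z * f z) - f y))
      (g := fun y => φ y * (M0 * (2 * Lf * ε)))
      (hφint.mul_const _) ?_
    · rw [Real.norm_eq_abs] at hbd
      refine hbd.trans ?_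
      rw [MeasureTheory.integral_mul_const, hφone, one_mul]
      ring_nf
      exact le_refl _
    · filter_upwards [hgM0] with y hy
      rw [Real.norm_eq_abs, abs_mul, abs_mul, abs_of_nonneg (hφ0 y)]
      by_cases h0 : φ y = 0
      · rw [h0, zero_mul, zero_mul, zero_mul]
      · rw [mul_assoc]
        apply mul_le_mul_of_nonneg_left _ (hφ0 y)
        exact mul_le_mul hy (inner y h0) (abs_nonneg _) hM0
  -- conclude uniform convergence
  rw [Metric.tendstoUniformlyOn_iff]
  intro δ hδ
  have htend : Tendsto (fun ε : ℝ => 2 * Lf * M0 * ε) (nhdsWithin 0 (Ioi 0)) (nhds 0) := by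
    have h0 : Tendsto (fun ε : ℝ => 2 * Lf * M0 * ε) (nhds 0) (nhds 0) := by
      have h1 : Tendsto (fun ε : ℝ => ε) (nhds (0:ℝ)) (nhds (0:ℝ)) := tendsto_id
      have := h1.const_mul (2 * Lf * M0 : ℝ)
      simpa using this
    exact h0.mono_left nhdsWithin_le_nhds
  filter_upwards [htend.eventually_lt_const hδ, self_mem_nhdsWithin] with ε hε1 hε2 x _
  simp only [Pi.zero_apply, dist_zero_left] -- limit function is 0
  rw [Real.norm_eq_abs]
  exact lt_of_le_of_lt (key ε hε2 x) hε1
end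

section
/- Let X and Y be globally Lipschitz vector fields on ℝⁿ. Then [J_ε X, J_ε Y] − J_ε([X,Y]) → 0 as ε → 0, uniformly on every compact subset of ℝⁿ. Here J_ε is applied componentwise, [J_ε X, J_ε Y](x) := D(J_ε Y)(x)((J_ε X)(x)) − D(J_ε X)(x)((J_ε Y)(x)) is the classical bracket of the mollified (smooth) vector fields, and [X,Y] is the almost-everywhere defined bracket of X and Y, which is a locally essentially bounded measurable vector field. -/
open Set MeasureTheory Metric Filter Convolution ContinuousLinearMap

/-- The (almost everywhere defined) Lie bracket `[X,Y](x) = DY(x)(X(x)) − DX(x)(Y(x))`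
of two Lipschitz vector fields. -/
noncomputable def lieBracketVF {n : ℕ}
    (X Y : EuclideanSpace ℝ (Fin n) → EuclideanSpace ℝ (Fin n))
    (x : EuclideanSpace ℝ (Fin n)) : EuclideanSpace ℝ (Fin n) :=
  fderiv ℝ Y x (X x) - fderiv ℝ X x (Y x)

namespace Stmt5Aux

variable {n : ℕ}

/-- The scaled kernel. -/
noncomputable def ker (χ : EuclideanSpace ℝ (Fin n) → ℝ) (ε : ℝ) :
    EuclideanSpace ℝ (Fin n) → ℝ :=
  fun t => (ε ^ n)⁻¹ * χ (ε⁻¹ • t)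

variable {χ : EuclideanSpace ℝ (Fin n) → ℝ} {ε : ℝ}

lemma moll_def {F : Type*} [NormedAddCommGroup F] [NormedSpace ℝ F]
    (g : EuclideanSpace ℝ (Fin n) → F) (x : EuclideanSpace ℝ (Fin n)) :
    friedrichsMollifier χ ε g x = ∫ y, ker χ ε (x - y) • g y := rfl

lemma moll_apply {F : Type*} [NormedAddCommGroup F] [NormedSpace ℝ F]
    (g : EuclideanSpace ℝ (Fin n) → F) (x : EuclideanSpace ℝ (Fin n)) :
    friedrichsMollifier χ ε g x = ∫ t, ker χ ε t • g (x - t) := by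
  rw [moll_def, ← integral_sub_left_eq_self (fun y => ker χ ε (x - y) • g y) volume x]
  congr 1
  ext t
  simp [sub_sub_cancel]

lemma moll_eq_conv {F : Type*} [NormedAddCommGroup F] [NormedSpace ℝ F]
    (g : EuclideanSpace ℝ (Fin n) → F) :
    friedrichsMollifier χ ε g = (ker χ ε) ⋆[ContinuousLinearMap.lsmul ℝ ℝ, volume] g := by
  funext x
  rw [moll_apply, convolution_def]
  simp

lemma ker_nonneg (hχ : ∀ x, 0 ≤ χ x) (hε : 0 < ε) (t : EuclideanSpace ℝ (Fin n)) :
    0 ≤ ker χ ε t :=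
  mul_nonneg (inv_nonneg.2 (pow_nonneg hε.le _)) (hχ _)

lemma ker_zero (hχ_supp : tsupport χ ⊆ closedBall 0 1) (hε : 0 < ε)
    {t : EuclideanSpace ℝ (Fin n)} (ht : ε < ‖t‖) : ker χ ε t = 0 := by
  have h1 : ε⁻¹ • t ∉ tsupport χ := by
    intro h
    have h2 := mem_closedBall_zero_iff.1 (hχ_supp h)
    rw [norm_smul, Real.norm_eq_abs, abs_of_pos (inv_pos.2 hε)] at h2
    have hεi : (0:ℝ) < ε⁻¹ := inv_pos.2 hε
    nlinarith [mul_lt_mul_of_pos_left ht hεi, inv_mul_cancel₀ hε.ne']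
  simp [ker, image_eq_zero_of_notMem_tsupport h1]

lemma ker_support (hχ_supp : tsupport χ ⊆ closedBall 0 1) (hε : 0 < ε)
    {t : EuclideanSpace ℝ (Fin n)} (ht : t ∉ closedBall (0 : EuclideanSpace ℝ (Fin n)) ε) :
    ker χ ε t = 0 := by
  apply ker_zero hχ_supp hε
  simpa [mem_closedBall_zero_iff, not_le] using ht

lemma ker_smooth (hχ_smooth : ContDiff ℝ (⊤ : ℕ∞) χ) : ContDiff ℝ (⊤ : ℕ∞) (ker χ ε) :=
  contDiff_const.mul (hχ_smooth.comp (contDiff_id.const_smul ε⁻¹))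

lemma ker_continuous (hχ_smooth : ContDiff ℝ (⊤ : ℕ∞) χ) : Continuous (ker χ ε) :=
  (ker_smooth hχ_smooth).continuous

lemma ker_hcs (hχ_supp : tsupport χ ⊆ closedBall 0 1) (hε : 0 < ε) :
    HasCompactSupport (ker χ ε) :=
  HasCompactSupport.intro (isCompact_closedBall 0 ε) (fun _ ht => ker_support hχ_supp hε ht)

lemma ker_integrable (hχ_smooth : ContDiff ℝ (⊤ : ℕ∞) χ) (hχ_supp : tsupport χ ⊆ closedBall 0 1)
    (hε : 0 < ε) : Integrable (ker χ ε) :=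
  (ker_continuous hχ_smooth).integrable_of_hasCompactSupport (ker_hcs hχ_supp hε)

lemma ker_integral (hχ_int : ∫ x, χ x = 1) (hε : 0 < ε) : ∫ t, ker χ ε t = 1 := by
  unfold ker
  rw [integral_const_mul, Measure.integral_comp_inv_smul volume χ ε, finrank_euclideanSpace_fin,
    hχ_int, abs_of_pos (pow_pos hε n)]
  simp [smul_eq_mul, inv_mul_cancel₀ (pow_pos hε n).ne']

lemma ker_integral_sub (hχ_int : ∫ x, χ x = 1) (hε : 0 < ε) (x : EuclideanSpace ℝ (Fin n)) :
    ∫ y, ker χ ε (x - y) = 1 := by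
  rw [integral_sub_left_eq_self (ker χ ε) volume x]
  exact ker_integral hχ_int hε

lemma ker_comp_integrable (hχ_smooth : ContDiff ℝ (⊤ : ℕ∞) χ) (hχ_supp : tsupport χ ⊆ closedBall 0 1)
    (hε : 0 < ε) (x : EuclideanSpace ℝ (Fin n)) :
    Integrable (fun y => ker χ ε (x - y)) :=
  (integrable_comp_sub_left (ker χ ε) x).2 (ker_integrable hχ_smooth hχ_supp hε)


lemma ker_sub_zero (hχ_supp : tsupport χ ⊆ closedBall 0 1) (hε : 0 < ε)
    {x y : EuclideanSpace ℝ (Fin n)} (hy : y ∉ closedBall x ε) : ker χ ε (x - y) = 0 := by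
  apply ker_zero hχ_supp hε
  rw [mem_closedBall, not_le, dist_comm, dist_eq_norm] at hy
  exact hy

/-- Basic bound: if `‖f y‖ ≤ C` on `closedBall x ε`, then `‖∫ ker χ ε (x-y) • f y‖ ≤ C`. -/
lemma norm_integral_ker_smul_le {F : Type*} [NormedAddCommGroup F] [NormedSpace ℝ F]
    (hχ_smooth : ContDiff ℝ (⊤ : ℕ∞) χ) (hχ_supp : tsupport χ ⊆ closedBall 0 1)
    (hχ_nonneg : ∀ x, 0 ≤ χ x) (hχ_int : ∫ x, χ x = 1) (hε : 0 < ε)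
    (x : EuclideanSpace ℝ (Fin n)) (f : EuclideanSpace ℝ (Fin n) → F) {C : ℝ}
    (hf : ∀ y ∈ closedBall x ε, ‖f y‖ ≤ C) :
    ‖∫ y, ker χ ε (x - y) • f y‖ ≤ C := by
  have h1 : ∀ y, ‖ker χ ε (x - y) • f y‖ ≤ ker χ ε (x - y) * C := by
    intro y
    by_cases hy : y ∈ closedBall x ε
    · rw [norm_smul, Real.norm_eq_abs, abs_of_nonneg (ker_nonneg hχ_nonneg hε _)]
      exact mul_le_mul_of_nonneg_left (hf y hy) (ker_nonneg hχ_nonneg hε _)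
    · simp [ker_sub_zero hχ_supp hε hy]
  calc ‖∫ y, ker χ ε (x - y) • f y‖ ≤ ∫ y, ker χ ε (x - y) * C :=
        norm_integral_le_of_norm_le ((ker_comp_integrable hχ_smooth hχ_supp hε x).mul_const C)
          (Eventually.of_forall h1)
    _ = (∫ y, ker χ ε (x - y)) * C := integral_mul_const _ _
    _ = C := by rw [ker_integral_sub hχ_int hε x, one_mul]

/-- Integrability of `ker χ ε (x - ·) • f` for a.e.-strongly-measurable locally bounded `f`. -/
lemma integrable_ker_smul {F : Type*} [NormedAddCommGroup F] [NormedSpace ℝ F]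
    (hχ_smooth : ContDiff ℝ (⊤ : ℕ∞) χ) (hχ_supp : tsupport χ ⊆ closedBall 0 1) (hε : 0 < ε)
    (x : EuclideanSpace ℝ (Fin n)) (f : EuclideanSpace ℝ (Fin n) → F)
    (hf : AEStronglyMeasurable f volume) {C : ℝ} (hC : 0 ≤ C)
    (hfb : ∀ y ∈ closedBall x ε, ‖f y‖ ≤ C) :
    Integrable (fun y => ker χ ε (x - y) • f y) := by
  obtain ⟨M, hM⟩ := (ker_hcs hχ_supp hε).exists_bound_of_continuous (ker_continuous hχ_smooth)
  have hM' : ∀ t, |ker χ ε t| ≤ M := fun t => by rw [← Real.norm_eq_abs]; exact hM t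
  have h0M : 0 ≤ M := le_trans (norm_nonneg _) (hM 0)
  have hmeas : AEStronglyMeasurable (fun y => ker χ ε (x - y) • f y) volume :=
    (((ker_continuous hχ_smooth).comp
      (continuous_const.sub continuous_id)).aestronglyMeasurable).smul hf
  have heq : (fun y => ker χ ε (x - y) • f y)
      = Set.indicator (closedBall x ε) (fun y => ker χ ε (x - y) • f y) := by
    ext y
    by_cases hy : y ∈ closedBall x ε
    · rw [Set.indicator_of_mem hy]
    · rw [Set.indicator_of_notMem hy]
      simp [ker_sub_zero hχ_supp hε hy]
  rw [heq, integrable_indicator_iff measurableSet_closedBall]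
  apply Measure.integrableOn_of_bounded (M := M * C) measure_closedBall_lt_top.ne hmeas
  apply ae_restrict_of_ae
  apply Eventually.of_forall
  intro y
  rw [norm_smul, Real.norm_eq_abs]
  by_cases hy : y ∈ closedBall x ε
  · exact mul_le_mul (hM' (x - y)) (hfb y hy) (norm_nonneg _) h0M
  · simp only [ker_sub_zero hχ_supp hε hy, abs_zero, zero_mul]
    positivity



lemma moll_differentiable (hχ_smooth : ContDiff ℝ (⊤ : ℕ∞) χ) (hχ_supp : tsupport χ ⊆ closedBall 0 1)
    (hε : 0 < ε) {W : EuclideanSpace ℝ (Fin n) → EuclideanSpace ℝ (Fin n)} {L : NNReal}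
    (hW : LipschitzWith L W) (x : EuclideanSpace ℝ (Fin n)) :
    DifferentiableAt ℝ (friedrichsMollifier χ ε W) x := by
  rw [moll_eq_conv]
  exact ((ker_hcs hχ_supp hε).hasFDerivAt_convolution_left (ContinuousLinearMap.lsmul ℝ ℝ)
    ((ker_smooth hχ_smooth).of_le (by simp)) hW.continuous.locallyIntegrable x).differentiableAt

/-- Key identity: the derivative of the mollification is the mollification of the
(a.e. defined) derivative, for Lipschitz vector fields. -/
lemma fderiv_moll_apply (hχ_smooth : ContDiff ℝ (⊤ : ℕ∞) χ) (hχ_supp : tsupport χ ⊆ closedBall 0 1)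
    (hε : 0 < ε) {W : EuclideanSpace ℝ (Fin n) → EuclideanSpace ℝ (Fin n)} {L : NNReal}
    (hW : LipschitzWith L W) (x v : EuclideanSpace ℝ (Fin n)) :
    fderiv ℝ (friedrichsMollifier χ ε W) x v
      = ∫ y, ker χ ε (x - y) • (fderiv ℝ W y v) := by
  have hcurve : HasDerivAt (fun s : ℝ => x + s • v) v 0 := by
    simpa using ((hasDerivAt_id (0:ℝ)).smul_const v).const_add x
  have h1 : HasDerivAt (fun s : ℝ => friedrichsMollifier χ ε W (x + s • v))
      (fderiv ℝ (friedrichsMollifier χ ε W) x v) 0 := by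
    have h0 : HasFDerivAt (friedrichsMollifier χ ε W)
        (fderiv ℝ (friedrichsMollifier χ ε W) x) ((fun s : ℝ => x + s • v) 0) := by
      simpa using (moll_differentiable hχ_smooth hχ_supp hε hW x).hasFDerivAt
    exact h0.comp_hasDerivAt 0 hcurve
  have hae : ∀ᵐ t : EuclideanSpace ℝ (Fin n) ∂volume, DifferentiableAt ℝ W (x - t) :=
    (quasiMeasurePreserving_sub_left_of_right_invariant volume x).tendsto_ae.eventually
      hW.ae_differentiableAt
  have key := hasDerivAt_integral_of_dominated_loc_of_lip
    (F := fun (s : ℝ) (t : EuclideanSpace ℝ (Fin n)) => ker χ ε t • W (x + s • v - t))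
    (F' := fun t => ker χ ε t • (fderiv ℝ W (x - t)) v)
    (x₀ := (0:ℝ)) (bound := fun t => |ker χ ε t| * (L * ‖v‖))
    (s := Set.univ) Filter.univ_mem
    (Eventually.of_forall fun s => (((ker_continuous hχ_smooth).smul
      (hW.continuous.comp (continuous_const.sub continuous_id))).aestronglyMeasurable))
    (by
      apply Continuous.integrable_of_hasCompactSupport
      · exact (ker_continuous hχ_smooth).smul
          (hW.continuous.comp (continuous_const.sub continuous_id))
      · exact HasCompactSupport.intro (isCompact_closedBall 0 ε)
          (fun t ht => by simp [ker_support hχ_supp hε ht]))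
    (((ker_continuous hχ_smooth).aestronglyMeasurable).smul
      (((measurable_fderiv_apply_const ℝ W v).comp
        (measurable_const.sub measurable_id)).aestronglyMeasurable))
    (by
      apply Eventually.of_forall
      intro t
      have l2 : LipschitzWith (‖ker χ ε t‖₊ * (L * ‖v‖₊))
          (fun s : ℝ => ker χ ε t • W (x + s • v - t)) := by
        apply LipschitzWith.of_dist_le_mul
        intro a b
        rw [dist_smul₀]
        calc ‖ker χ ε t‖ * dist (W (x + a • v - t)) (W (x + b • v - t))
            ≤ ‖ker χ ε t‖ * (L * dist (x + a • v - t) (x + b • v - t)) := by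
              gcongr
              exact hW.dist_le_mul _ _
          _ = ‖ker χ ε t‖ * (↑L * (‖v‖ * dist a b)) := by
              congr 2
              rw [dist_eq_norm]
              have hsub : (x + a • v - t) - (x + b • v - t) = (a - b) • v := by
                rw [sub_smul]; abel
              rw [hsub, norm_smul, Real.norm_eq_abs, ← Real.dist_eq, mul_comm]
          _ = ↑(‖ker χ ε t‖₊ * (L * ‖v‖₊)) * dist a b := by push_cast; ring
      have heq : (Real.nnabs (|ker χ ε t| * (↑L * ‖v‖))) = ‖ker χ ε t‖₊ * (L * ‖v‖₊) := by
        ext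
        simp only [Real.coe_nnabs, NNReal.coe_mul, coe_nnnorm, Real.norm_eq_abs, abs_mul,
          abs_abs, NNReal.abs_eq, abs_norm]
      rw [heq]
      exact l2.lipschitzOnWith)
    (((ker_integrable hχ_smooth hχ_supp hε).abs).mul_const _)
    (by
      filter_upwards [hae] with t ht
      have hc : HasDerivAt (fun s : ℝ => x + s • v - t) v 0 := hcurve.sub_const t
      have h0 : HasFDerivAt W (fderiv ℝ W (x - t)) ((fun s : ℝ => x + s • v - t) 0) := by
        simpa using ht.hasFDerivAt
      exact (h0.comp_hasDerivAt 0 hc).const_smul (ker χ ε t))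
  obtain ⟨-, h2⟩ := key
  have h3 : (fun s : ℝ => ∫ t, ker χ ε t • W (x + s • v - t))
      = fun s : ℝ => friedrichsMollifier χ ε W (x + s • v) := by
    funext s
    rw [moll_apply]
  rw [h3] at h2
  rw [h1.unique h2,
    ← integral_sub_left_eq_self (fun y => ker χ ε (x - y) • (fderiv ℝ W y) v) volume x]
  congr 1
  ext t
  rw [sub_sub_cancel]


lemma norm_fderiv_le_lip {W : EuclideanSpace ℝ (Fin n) → EuclideanSpace ℝ (Fin n)} {L : NNReal}
    (hW : LipschitzWith L W) (y : EuclideanSpace ℝ (Fin n)) : ‖fderiv ℝ W y‖ ≤ L :=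
  norm_fderiv_le_of_lipschitz ℝ hW

lemma norm_fderiv_moll_apply_le (hχ_smooth : ContDiff ℝ (⊤ : ℕ∞) χ)
    (hχ_supp : tsupport χ ⊆ closedBall 0 1) (hχ_nonneg : ∀ x, 0 ≤ χ x)
    (hχ_int : ∫ x, χ x = 1) (hε : 0 < ε)
    {W : EuclideanSpace ℝ (Fin n) → EuclideanSpace ℝ (Fin n)} {L : NNReal}
    (hW : LipschitzWith L W) (x u : EuclideanSpace ℝ (Fin n)) :
    ‖fderiv ℝ (friedrichsMollifier χ ε W) x u‖ ≤ L * ‖u‖ := by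
  rw [fderiv_moll_apply hχ_smooth hχ_supp hε hW x u]
  apply norm_integral_ker_smul_le hχ_smooth hχ_supp hχ_nonneg hχ_int hε
  intro y _
  calc ‖fderiv ℝ W y u‖ ≤ ‖fderiv ℝ W y‖ * ‖u‖ := (fderiv ℝ W y).le_opNorm u
    _ ≤ L * ‖u‖ := by gcongr; exact norm_fderiv_le_lip hW y

lemma norm_moll_sub_self_le (hχ_smooth : ContDiff ℝ (⊤ : ℕ∞) χ)
    (hχ_supp : tsupport χ ⊆ closedBall 0 1) (hχ_nonneg : ∀ x, 0 ≤ χ x)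
    (hχ_int : ∫ x, χ x = 1) (hε : 0 < ε)
    {W : EuclideanSpace ℝ (Fin n) → EuclideanSpace ℝ (Fin n)} {L : NNReal}
    (hW : LipschitzWith L W) (x : EuclideanSpace ℝ (Fin n)) :
    ‖friedrichsMollifier χ ε W x - W x‖ ≤ L * ε := by
  have hint1 : Integrable (fun y => ker χ ε (x - y) • W y) := by
    apply integrable_ker_smul hχ_smooth hχ_supp hε x W hW.continuous.aestronglyMeasurable
      (C := ‖W x‖ + L * ε) (by positivity)
    intro y hy
    calc ‖W y‖ ≤ ‖W x‖ + ‖W y - W x‖ := by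
          linarith [norm_sub_norm_le (W y) (W x)]
      _ ≤ ‖W x‖ + L * ε := by
          gcongr
          rw [← dist_eq_norm]
          exact le_trans (hW.dist_le_mul y x) (by gcongr; exact mem_closedBall.1 hy)
  have hint2 : Integrable (fun y => ker χ ε (x - y) • W x) :=
    (ker_comp_integrable hχ_smooth hχ_supp hε x).smul_const (W x)
  have hWx : W x = ∫ y, ker χ ε (x - y) • W x := by
    rw [integral_smul_const, ker_integral_sub hχ_int hε, one_smul]
  rw [moll_def]
  conv_lhs => rw [hWx]
  rw [← integral_sub hint1 hint2]
  simp only [← smul_sub]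
  apply norm_integral_ker_smul_le hχ_smooth hχ_supp hχ_nonneg hχ_int hε
  intro y hy
  rw [← dist_eq_norm]
  exact le_trans (hW.dist_le_mul y x) (by gcongr; exact mem_closedBall.1 hy)

lemma aesm_fderiv_apply (W V : EuclideanSpace ℝ (Fin n) → EuclideanSpace ℝ (Fin n))
    (hV : Continuous V) :
    AEStronglyMeasurable (fun y => fderiv ℝ W y (V y)) volume := by
  have h0 : Measurable (fun y => (fderiv ℝ W y, V y)) :=
    (measurable_fderiv ℝ W).prodMk hV.measurable
  have h1 : Continuous (fun p : (EuclideanSpace ℝ (Fin n) →L[ℝ] EuclideanSpace ℝ (Fin n))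
      × EuclideanSpace ℝ (Fin n) => p.1 p.2) := isBoundedBilinearMap_apply.continuous
  exact ((h1.measurable.comp h0)).aestronglyMeasurable

lemma integrable_ker_fderiv_apply (hχ_smooth : ContDiff ℝ (⊤ : ℕ∞) χ)
    (hχ_supp : tsupport χ ⊆ closedBall 0 1) (hε : 0 < ε)
    {W V : EuclideanSpace ℝ (Fin n) → EuclideanSpace ℝ (Fin n)} {L LV : NNReal}
    (hW : LipschitzWith L W) (hV : LipschitzWith LV V) (x : EuclideanSpace ℝ (Fin n)) :
    Integrable (fun y => ker χ ε (x - y) • (fderiv ℝ W y (V y))) := by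
  apply integrable_ker_smul hχ_smooth hχ_supp hε x _ (aesm_fderiv_apply W V hV.continuous)
    (C := L * (‖V x‖ + LV * ε)) (by positivity)
  intro y hy
  calc ‖fderiv ℝ W y (V y)‖ ≤ ‖fderiv ℝ W y‖ * ‖V y‖ := (fderiv ℝ W y).le_opNorm _
    _ ≤ L * (‖V x‖ + LV * ε) := by
        apply mul_le_mul (norm_fderiv_le_lip hW y) ?_ (norm_nonneg _) (NNReal.coe_nonneg L)
        calc ‖V y‖ ≤ ‖V x‖ + ‖V y - V x‖ := by
              linarith [norm_sub_norm_le (V y) (V x)]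
          _ ≤ ‖V x‖ + LV * ε := by
              gcongr
              rw [← dist_eq_norm]
              exact le_trans (hV.dist_le_mul y x) (by gcongr; exact mem_closedBall.1 hy)

lemma norm_comm_half_le (hχ_smooth : ContDiff ℝ (⊤ : ℕ∞) χ)
    (hχ_supp : tsupport χ ⊆ closedBall 0 1) (hχ_nonneg : ∀ x, 0 ≤ χ x)
    (hχ_int : ∫ x, χ x = 1) (hε : 0 < ε)
    {W V : EuclideanSpace ℝ (Fin n) → EuclideanSpace ℝ (Fin n)} {L LV : NNReal}
    (hW : LipschitzWith L W) (hV : LipschitzWith LV V) (x : EuclideanSpace ℝ (Fin n)) :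
    ‖fderiv ℝ (friedrichsMollifier χ ε W) x (friedrichsMollifier χ ε V x)
      - ∫ y, ker χ ε (x - y) • (fderiv ℝ W y (V y))‖ ≤ L * (LV * ε) + L * (LV * ε) := by
  have hint1 : Integrable (fun y => ker χ ε (x - y) • (fderiv ℝ W y (V x))) := by
    apply integrable_ker_smul hχ_smooth hχ_supp hε x _
      (((measurable_fderiv_apply_const ℝ W (V x))).aestronglyMeasurable)
      (C := L * ‖V x‖) (by positivity)
    intro y _
    calc ‖fderiv ℝ W y (V x)‖ ≤ ‖fderiv ℝ W y‖ * ‖V x‖ := (fderiv ℝ W y).le_opNorm _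
      _ ≤ L * ‖V x‖ := by gcongr; exact norm_fderiv_le_lip hW y
  have hint2 : Integrable (fun y => ker χ ε (x - y) • (fderiv ℝ W y (V y))) :=
    integrable_ker_fderiv_apply hχ_smooth hχ_supp hε hW hV x
  have hkey : fderiv ℝ (friedrichsMollifier χ ε W) x (V x)
      = ∫ y, ker χ ε (x - y) • (fderiv ℝ W y (V x)) :=
    fderiv_moll_apply hχ_smooth hχ_supp hε hW x (V x)
  calc ‖fderiv ℝ (friedrichsMollifier χ ε W) x (friedrichsMollifier χ ε V x)
      - ∫ y, ker χ ε (x - y) • (fderiv ℝ W y (V y))‖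
      ≤ ‖fderiv ℝ (friedrichsMollifier χ ε W) x (friedrichsMollifier χ ε V x)
          - fderiv ℝ (friedrichsMollifier χ ε W) x (V x)‖
        + ‖fderiv ℝ (friedrichsMollifier χ ε W) x (V x)
          - ∫ y, ker χ ε (x - y) • (fderiv ℝ W y (V y))‖ := norm_sub_le_norm_sub_add_norm_sub _ _ _
    _ ≤ L * (LV * ε) + L * (LV * ε) := by
        gcongr
        · rw [← map_sub]
          calc ‖fderiv ℝ (friedrichsMollifier χ ε W) x
                (friedrichsMollifier χ ε V x - V x)‖
              ≤ L * ‖friedrichsMollifier χ ε V x - V x‖ :=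
                norm_fderiv_moll_apply_le hχ_smooth hχ_supp hχ_nonneg hχ_int hε hW x _
            _ ≤ L * (LV * ε) := by
                gcongr
                exact norm_moll_sub_self_le hχ_smooth hχ_supp hχ_nonneg hχ_int hε hV x
        · rw [hkey, ← integral_sub hint1 hint2]
          simp only [← smul_sub, ← map_sub]
          apply norm_integral_ker_smul_le hχ_smooth hχ_supp hχ_nonneg hχ_int hε
          intro y hy
          calc ‖fderiv ℝ W y (V x - V y)‖ ≤ ‖fderiv ℝ W y‖ * ‖V x - V y‖ :=
                (fderiv ℝ W y).le_opNorm _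
            _ ≤ L * (LV * ε) := by
                apply mul_le_mul (norm_fderiv_le_lip hW y) ?_ (norm_nonneg _)
                  (NNReal.coe_nonneg L)
                rw [← dist_eq_norm]
                exact le_trans (hV.dist_le_mul x y)
                  (by gcongr; rw [dist_comm]; exact mem_closedBall.1 hy)


lemma main_est (hχ_smooth : ContDiff ℝ (⊤ : ℕ∞) χ) (hχ_supp : tsupport χ ⊆ closedBall 0 1)
    (hχ_nonneg : ∀ x, 0 ≤ χ x) (hχ_int : ∫ x, χ x = 1) (hε : 0 < ε)
    {X Y : EuclideanSpace ℝ (Fin n) → EuclideanSpace ℝ (Fin n)} {LX LY : NNReal}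
    (hX : LipschitzWith LX X) (hY : LipschitzWith LY Y) (x : EuclideanSpace ℝ (Fin n)) :
    ‖lieBracketVF (friedrichsMollifier χ ε X) (friedrichsMollifier χ ε Y) x
      - friedrichsMollifier χ ε (lieBracketVF X Y) x‖ ≤ 4 * LX * LY * ε := by
  have hsplit : friedrichsMollifier χ ε (lieBracketVF X Y) x
      = (∫ y, ker χ ε (x - y) • (fderiv ℝ Y y (X y)))
        - ∫ y, ker χ ε (x - y) • (fderiv ℝ X y (Y y)) := by
    rw [moll_def, ← integral_sub (integrable_ker_fderiv_apply hχ_smooth hχ_supp hε hY hX x)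
      (integrable_ker_fderiv_apply hχ_smooth hχ_supp hε hX hY x)]
    congr 1
    ext y
    rw [← smul_sub]
    rfl
  have h1 := norm_comm_half_le hχ_smooth hχ_supp hχ_nonneg hχ_int hε hY hX x
  have h2 := norm_comm_half_le hχ_smooth hχ_supp hχ_nonneg hχ_int hε hX hY x
  rw [hsplit]
  show ‖(fderiv ℝ (friedrichsMollifier χ ε Y) x (friedrichsMollifier χ ε X x)
      - fderiv ℝ (friedrichsMollifier χ ε X) x (friedrichsMollifier χ ε Y x))
      - ((∫ y, ker χ ε (x - y) • (fderiv ℝ Y y (X y)))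
        - ∫ y, ker χ ε (x - y) • (fderiv ℝ X y (Y y)))‖ ≤ _
  rw [sub_sub_sub_comm]
  calc ‖(fderiv ℝ (friedrichsMollifier χ ε Y) x (friedrichsMollifier χ ε X x)
        - ∫ y, ker χ ε (x - y) • (fderiv ℝ Y y (X y)))
      - (fderiv ℝ (friedrichsMollifier χ ε X) x (friedrichsMollifier χ ε Y x)
        - ∫ y, ker χ ε (x - y) • (fderiv ℝ X y (Y y)))‖
      ≤ ‖fderiv ℝ (friedrichsMollifier χ ε Y) x (friedrichsMollifier χ ε X x)
        - ∫ y, ker χ ε (x - y) • (fderiv ℝ Y y (X y))‖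
        + ‖fderiv ℝ (friedrichsMollifier χ ε X) x (friedrichsMollifier χ ε Y x)
        - ∫ y, ker χ ε (x - y) • (fderiv ℝ X y (Y y))‖ := norm_sub_le _ _
    _ ≤ (LY * (LX * ε) + LY * (LX * ε)) + (LX * (LY * ε) + LX * (LY * ε)) := add_le_add h1 h2
    _ = 4 * LX * LY * ε := by ring

end Stmt5Aux

/-- **Convergence (2.13).** For Lipschitz vector fields `X, Y` on `ℝⁿ`,
`[J_ε X, J_ε Y] − J_ε [X,Y] → 0` as `ε → 0⁺`, uniformly on every compact subset of `ℝⁿ`,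
where `[J_ε X, J_ε Y]` is the classical bracket of the mollified (smooth) vector fields and
`[X,Y]` is the almost-everywhere defined bracket of `X` and `Y`. -/
theorem stmt_5 {n : ℕ}
    (χ : EuclideanSpace ℝ (Fin n) → ℝ) (hχ_smooth : ContDiff ℝ (⊤ : ℕ∞) χ)
    (hχ_supp : tsupport χ ⊆ closedBall 0 1) (hχ_cpt : HasCompactSupport χ)
    (hχ_nonneg : ∀ x, 0 ≤ χ x) (hχ_int : ∫ x, χ x = 1)
    (X Y : EuclideanSpace ℝ (Fin n) → EuclideanSpace ℝ (Fin n))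
    (LX LY : NNReal) (hX : LipschitzWith LX X) (hY : LipschitzWith LY Y) :
    ∀ K : Set (EuclideanSpace ℝ (Fin n)), IsCompact K →
      TendstoUniformlyOn
        (fun (ε : ℝ) (x : EuclideanSpace ℝ (Fin n)) =>
          lieBracketVF (friedrichsMollifier χ ε X) (friedrichsMollifier χ ε Y) x
            - friedrichsMollifier χ ε (lieBracketVF X Y) x)
        0 (nhdsWithin 0 (Ioi 0)) K := by

  intro K _
  rw [tendstoUniformlyOn_iff]
  intro η hη
  have hC : (0:ℝ) ≤ 4 * LX * LY := by positivity
  have hmem : Ioo (0:ℝ) (η / (4 * LX * LY + 1)) ∈ nhdsWithin (0:ℝ) (Ioi 0) :=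
    Ioo_mem_nhdsGT_of_mem ⟨le_refl 0, by positivity⟩
  filter_upwards [hmem] with ε hε
  intro x _
  simp only [Pi.zero_apply]
  rw [dist_comm, dist_zero_right]
  calc ‖lieBracketVF (friedrichsMollifier χ ε X) (friedrichsMollifier χ ε Y) x
      - friedrichsMollifier χ ε (lieBracketVF X Y) x‖
      ≤ 4 * LX * LY * ε :=
        Stmt5Aux.main_est hχ_smooth hχ_supp hχ_nonneg hχ_int hε.1 hX hY x
    _ ≤ (4 * LX * LY + 1) * ε := by nlinarith [hε.1]
    _ < η := by
        rw [mul_comm, ← lt_div_iff₀ (by positivity : (0:ℝ) < 4 * LX * LY + 1)]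
        exact hε.2
end

section
/- Let O ⊆ ℝⁿ be open, let 1 ≤ k < n, denote by e₁,…,e_n the standard basis of ℝⁿ, and let Y₁,…,Y_k be Lipschitz vector fields on O of the form Y_i(x) = e_i + Σ_{ℓ=k+1}^{n} D_{iℓ}(x) e_ℓ, where each D_{iℓ} : O → ℝ is Lipschitz. Suppose that for almost every x ∈ O and all 1 ≤ i,j ≤ k, the bracket [Y_i,Y_j](x) lies in the real linear span of Y₁(x),…,Y_k(x). Then [Y_i,Y_j](x) = 0 for almost every x ∈ O and all 1 ≤ i,j ≤ k. -/
open Set MeasureTheory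

/-- **Normalization (2.4)–(2.6).** Let `Y₁,…,Y_k` be Lipschitz vector fields on an open
`O ⊆ ℝⁿ` (`k < n`) in normal form `Y_i = e_i + Σ_{ℓ ≥ k} D_{iℓ} e_ℓ` with `D_{iℓ}` Lipschitz.
If for a.e. `x ∈ O` each bracket `[Y_i,Y_j](x)` lies in `span{Y₁(x),…,Y_k(x)}`, then the
brackets vanish: `[Y_i,Y_j](x) = 0` for a.e. `x ∈ O`. -/
theorem stmt_6 {n k : ℕ} (hk : 1 ≤ k) (hkn : k < n)
    (O : Set (EuclideanSpace ℝ (Fin n))) (hO : IsOpen O)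
    (Y : Fin k → EuclideanSpace ℝ (Fin n) → EuclideanSpace ℝ (Fin n))
    (D : Fin k → Fin n → EuclideanSpace ℝ (Fin n) → ℝ)
    (L : NNReal) (hYlip : ∀ i, LipschitzOnWith L (Y i) O)
    (hDlip : ∀ i ℓ, LipschitzOnWith L (D i ℓ) O)
    (hform : ∀ i : Fin k, ∀ x ∈ O, ∀ j : Fin n,
      Y i x j = (if (j : ℕ) = (i : ℕ) then (1:ℝ) else 0)
        + (if k ≤ (j : ℕ) then D i j x else 0))
    (hinv : ∀ᵐ x ∂(volume : Measure (EuclideanSpace ℝ (Fin n))), x ∈ O →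
      ∀ i j : Fin k, (fderiv ℝ (Y j) x (Y i x) - fderiv ℝ (Y i) x (Y j x))
        ∈ Submodule.span ℝ (Set.range fun i : Fin k => Y i x)) :
    ∀ᵐ x ∂(volume : Measure (EuclideanSpace ℝ (Fin n))), x ∈ O →
      ∀ i j : Fin k, fderiv ℝ (Y j) x (Y i x) - fderiv ℝ (Y i) x (Y j x) = 0 := by
  -- First k coordinates of any derivative of Y j vanish on O
  have hcoord : ∀ j : Fin k, ∀ x ∈ O, ∀ m : Fin n, (m : ℕ) < k →
      ∀ v, fderiv ℝ (Y j) x v m = 0 := by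
    intro j x hxO m hm v
    by_cases hd : DifferentiableAt ℝ (Y j) x
    · have heq : (fun y => Y j y m) =ᶠ[nhds x]
          fun _ => (if (m : ℕ) = (j : ℕ) then (1:ℝ) else 0) := by
        filter_upwards [hO.mem_nhds hxO] with y hy
        rw [hform j y hy m, if_neg (not_le.mpr hm), add_zero]
      have hproj : fderiv ℝ (fun y => Y j y m) x
          = (EuclideanSpace.proj m : EuclideanSpace ℝ (Fin n) →L[ℝ] ℝ).comp
            (fderiv ℝ (Y j) x) :=
        ((EuclideanSpace.proj m : EuclideanSpace ℝ (Fin n) →L[ℝ] ℝ).hasFDerivAt.comp x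
          hd.hasFDerivAt).fderiv
      have h0 : fderiv ℝ (fun y => Y j y m) x = 0 := by
        rw [heq.fderiv_eq]; exact fderiv_const_apply _
      have := congrFun (congrArg (fun T => (T : _ →L[ℝ] ℝ) ∘ id) (hproj ▸ h0)) v
      have h1 : ((EuclideanSpace.proj m : EuclideanSpace ℝ (Fin n) →L[ℝ] ℝ).comp
          (fderiv ℝ (Y j) x)) v = 0 := by rw [← hproj, h0]; rfl
      simpa using h1
    · rw [fderiv_zero_of_not_differentiableAt hd]; rfl
  filter_upwards [hinv] with x hx hxO i j
  obtain ⟨c, hc⟩ := (Submodule.mem_span_range_iff_exists_fun ℝ).mp (hx hxO i j)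
  have hc0 : ∀ m : Fin k, c m = 0 := by
    intro m
    have hmlt : (m : ℕ) < n := m.isLt.trans hkn
    have hYval : ∀ l : Fin k, Y l x ⟨(m : ℕ), hmlt⟩
        = (if (m : ℕ) = (l : ℕ) then (1:ℝ) else 0) := by
      intro l
      rw [hform l x hxO, if_neg (not_le.mpr m.isLt), add_zero]
    have hBm : (fderiv ℝ (Y j) x (Y i x) - fderiv ℝ (Y i) x (Y j x)) ⟨(m : ℕ), hmlt⟩ = 0 := by
      have h1 := hcoord j x hxO ⟨(m : ℕ), hmlt⟩ m.isLt (Y i x)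
      have h2 := hcoord i x hxO ⟨(m : ℕ), hmlt⟩ m.isLt (Y j x)
      simp [PiLp.sub_apply, h1, h2]
    have hstep : (∑ l : Fin k, c l * Y l x ⟨(m : ℕ), hmlt⟩) = c m := by
      simp only [hYval, mul_ite, mul_one, mul_zero, Fin.val_eq_val, eq_comm]
      simp
    calc c m = ∑ l : Fin k, c l * Y l x ⟨(m : ℕ), hmlt⟩ := hstep.symm
      _ = (∑ l : Fin k, c l • Y l x) ⟨(m : ℕ), hmlt⟩ := by
            have h := map_sum (EuclideanSpace.proj (⟨(m : ℕ), hmlt⟩ : Fin n) :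
              EuclideanSpace ℝ (Fin n) →L[ℝ] ℝ) (fun l => c l • Y l x) Finset.univ
            simp only [PiLp.proj_apply, PiLp.smul_apply, smul_eq_mul] at h
            exact h.symm
      _ = 0 := by rw [hc]; exact hBm
  rw [← hc]
  simp [hc0]
end

section
/- Write ℝⁿ = ℝ^k × ℝ^{n−k} with 1 ≤ k < n, and denote by e₁,…,e_n the standard basis of ℝⁿ. Let Y₁,…,Y_k be globally Lipschitz vector fields on ℝⁿ of the form Y_i(x) = e_i + Y_i^#(x), where Y_i^#(x) ∈ {0} × ℝ^{n−k} for every x, Y_i^#(0) = 0, and [Y_i,Y_j](x) = 0 for almost every x ∈ ℝⁿ and all 1 ≤ i,j ≤ k. Define G(t,z) := 𝓕^{t₁}_{Y₁} ∘ ⋯ ∘ 𝓕^{t_k}_{Y_k}(0,z) for t = (t₁,…,t_k) ∈ ℝ^k and z ∈ ℝ^{n−k}. Then there exist an open neighborhood U₀ of (0,0) in ℝ^k × ℝ^{n−k}, an open neighborhood U₁ of 0 in ℝⁿ, and a constant C ≥ 1 such that G maps U₀ bijectively onto U₁ and C^{−1}|p − q| ≤ |G(p) − G(q)| ≤ C|p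 − q| for all p, q ∈ U₀; in particular G : U₀ → U₁ is a Lipschitz homeomorphism with Lipschitz inverse. -/
/-!
Since every `Y_i` has first component `e_i`, the map `Φ_t = 𝓕^{t₁}_{Y₁} ∘ ⋯ ∘ 𝓕^{t_k}_{Y_k}`
shifts the first coordinate by `t`, so `G(t, z) = Φ_t(0, z)` has first coordinate `t`. By Grönwall
each `𝓕^s_{Y_i}` with `|s| ≤ 1` is `e^L`-Lipschitz, with inverse `𝓕^{-s}_{Y_i}` of the same kind, so
the `Φ_t` with `|t| ≤ 1` are uniformly bi-Lipschitz; and since the fields grow at most linearly,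
`t ↦ Φ_t x` is Lipschitz, uniformly for `|x| ≤ 1`. Comparing `G p - G q` with
`Φ_{p₁}(0, p₂) - Φ_{p₁}(0, q₂)` then bounds `|p - q|` by `|G p - G q|` on the unit ball and vice
versa, and solving `Φ_{y₁} x = y` shows that `G` covers a small ball around `0`.
-/

open Set MeasureTheory

/-- Composition `𝓕¹ ∘ 𝓕² ∘ ⋯ ∘ 𝓕ᵏ` of a finite family of maps. -/
def flowComp {α : Type*} {k : ℕ} (F : Fin k → α → α) : α → α :=
  (List.ofFn F).foldr (· ∘ ·) id

open Real NNReal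

lemma gronwallBound_le_add_mul_mul_exp {δ K ε x : ℝ} (hK : 0 ≤ K) (hε : 0 ≤ ε) :
    gronwallBound δ K ε x ≤ (δ + ε * x) * exp (K * x) := by
  rcases hK.eq_or_lt with rfl | hK
  · simp [gronwallBound_K0]
  · have hexp : exp (K * x) - 1 ≤ K * x * exp (K * x) := by
      have hprod : exp (K * x) * exp (-(K * x)) = 1 := by rw [← exp_add, add_neg_cancel, exp_zero]
      nlinarith [mul_le_mul_of_nonneg_left (add_one_le_exp (-(K * x))) (exp_pos (K * x)).le]
    have : ε / K * (exp (K * x) - 1) ≤ ε * x * exp (K * x) := by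
      rw [div_mul_eq_mul_div, div_le_iff₀ hK]
      nlinarith [mul_le_mul_of_nonneg_left hexp hε]
    rw [gronwallBound_of_K_ne_0 hK.ne']
    linarith

section Flow

variable {E : Type*} [NormedAddCommGroup E] [NormedSpace ℝ E]

structure IsFlow (Z : E → E) (f : ℝ → E → E) : Prop where
  apply_zero : ∀ x, f 0 x = x
  hasDerivAt : ∀ t x, HasDerivAt (fun s => f s x) (Z (f t x)) t

variable {Z : E → E} {f : ℝ → E → E} {L : ℝ≥0}

namespace IsFlow

lemma neg (hf : IsFlow Z f) : IsFlow (-Z) (fun t => f (-t)) where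
  apply_zero x := by simpa using hf.apply_zero x
  hasDerivAt t x := by
    simpa [Function.comp_def] using (hf.hasDerivAt (-t) x).scomp t (hasDerivAt_neg t)

lemma apply_add (hf : IsFlow Z f) (hZ : LipschitzWith L Z) (a b : ℝ) (x : E) :
    f (a + b) x = f a (f b x) := by
  have := ODE_solution_unique_univ (v := fun _ => Z) (s := fun _ => univ) (t₀ := 0)
    (f := fun s => f (s + b) x) (g := fun s => f s (f b x)) (fun _ => hZ.lipschitzOnWith)
    (fun t => ⟨(hf.hasDerivAt (t + b) x).comp_add_const t b, trivial⟩)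
    (fun t => ⟨hf.hasDerivAt t (f b x), trivial⟩) (by simp [hf.apply_zero])
  exact congrFun this a

lemma apply_apply_neg (hf : IsFlow Z f) (hZ : LipschitzWith L Z) (t : ℝ) (x : E) :
    f t (f (-t) x) = x := by
  rw [← hf.apply_add hZ, add_neg_cancel, hf.apply_zero]

lemma surjective (hf : IsFlow Z f) (hZ : LipschitzWith L Z) (t : ℝ) :
    Function.Surjective (f t) :=
  fun x => ⟨f (-t) x, hf.apply_apply_neg hZ t x⟩

lemma map_apply (hf : IsFlow Z f) {F : Type*} [NormedAddCommGroup F] [NormedSpace ℝ F]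
    (ℓ : E →L[ℝ] F) {v : F} (hℓ : ∀ x, ℓ (Z x) = v) (t : ℝ) (x : E) :
    ℓ (f t x) = ℓ x + t • v := by
  have hderiv : ∀ s, HasDerivAt (fun s => ℓ (f s x) - s • v) 0 s := fun s => by
    simpa [hℓ, Function.comp_def, Pi.sub_def] using
      (ℓ.hasFDerivAt.comp_hasDerivAt s (hf.hasDerivAt s x)).sub ((hasDerivAt_id s).smul_const v)
  have := is_const_of_deriv_eq_zero (fun s => (hderiv s).differentiableAt)
    (fun s => (hderiv s).deriv) t 0
  simp only [hf.apply_zero, zero_smul, sub_zero] at this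
  exact sub_eq_iff_eq_add'.mp this |>.trans (add_comm _ _)

lemma dist_le_of_nonneg (hf : IsFlow Z f) (hZ : LipschitzWith L Z) {t : ℝ} (ht : 0 ≤ t)
    (x y : E) : dist (f t x) (f t y) ≤ exp (L * t) * dist x y := by
  have := dist_le_of_trajectories_ODE (v := fun _ => Z) (a := 0) (b := t)
    (f := fun s => f s x) (g := fun s => f s y) (fun _ => hZ)
    (fun s _ => (hf.hasDerivAt s x).continuousAt.continuousWithinAt)
    (fun s _ => (hf.hasDerivAt s x).hasDerivWithinAt)
    (fun s _ => (hf.hasDerivAt s y).continuousAt.continuousWithinAt)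
    (fun s _ => (hf.hasDerivAt s y).hasDerivWithinAt)
    (by rw [hf.apply_zero, hf.apply_zero]) t ⟨ht, le_rfl⟩
  simpa [mul_comm] using this

lemma dist_le (hf : IsFlow Z f) (hZ : LipschitzWith L Z) (t : ℝ) (x y : E) :
    dist (f t x) (f t y) ≤ exp (L * |t|) * dist x y := by
  rcases le_or_gt 0 t with ht | ht
  · simpa [abs_of_nonneg ht] using hf.dist_le_of_nonneg hZ ht x y
  · simpa [abs_of_neg ht] using hf.neg.dist_le_of_nonneg hZ.neg (neg_nonneg.2 ht.le) x y

lemma norm_le_of_nonneg (hf : IsFlow Z f) (hZ : LipschitzWith L Z) {t : ℝ} (ht : 0 ≤ t)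
    (x : E) : ‖f t x‖ ≤ (‖x‖ + ‖Z 0‖ * t) * exp (L * t) := by
  have hZle : ∀ y, ‖Z y‖ ≤ L * ‖y‖ + ‖Z 0‖ := fun y => by
    have := hZ.norm_sub_le y 0
    rw [sub_zero] at this
    linarith [norm_le_norm_add_norm_sub' (Z y) (Z 0)]
  have := norm_le_gronwallBound_of_norm_deriv_right_le (a := 0) (b := t)
    (f := fun s => f s x) (fun s _ => (hf.hasDerivAt s x).continuousAt.continuousWithinAt)
    (fun s _ => (hf.hasDerivAt s x).hasDerivWithinAt) (by rw [hf.apply_zero])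
    (fun s _ => hZle (f s x)) t ⟨ht, le_rfl⟩
  rw [sub_zero] at this
  exact this.trans (gronwallBound_le_add_mul_mul_exp L.2 (norm_nonneg _))

lemma norm_le (hf : IsFlow Z f) (hZ : LipschitzWith L Z) (t : ℝ) (x : E) :
    ‖f t x‖ ≤ (‖x‖ + ‖Z 0‖ * |t|) * exp (L * |t|) := by
  rcases le_or_gt 0 t with ht | ht
  · simpa [abs_of_nonneg ht] using hf.norm_le_of_nonneg hZ ht x
  · simpa [abs_of_neg ht] using hf.neg.norm_le_of_nonneg hZ.neg (neg_nonneg.2 ht.le) x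

lemma lipschitzWith_of_abs_le_one (hf : IsFlow Z f) (hZ : LipschitzWith L Z) {t : ℝ}
    (ht : |t| ≤ 1) : LipschitzWith (exp L).toNNReal (f t) :=
  LipschitzWith.of_dist_le_mul fun x y => by
    rw [coe_toNNReal _ (exp_pos _).le]
    refine (hf.dist_le hZ t x y).trans (mul_le_mul_of_nonneg_right ?_ dist_nonneg)
    exact exp_le_exp.2 (mul_le_of_le_one_right L.2 ht)

lemma antilipschitzWith_of_abs_le_one (hf : IsFlow Z f) (hZ : LipschitzWith L Z) {t : ℝ}
    (ht : |t| ≤ 1) : AntilipschitzWith (exp L).toNNReal (f t) :=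
  AntilipschitzWith.of_le_mul_dist fun x y => by
    simpa only [← hf.apply_add hZ, neg_add_cancel, hf.apply_zero] using
      (hf.lipschitzWith_of_abs_le_one hZ (t := -t) (by rwa [abs_neg])).dist_le_mul (f t x) (f t y)

variable {M : ℝ}

lemma norm_le_of_abs_le_one (hf : IsFlow Z f) (hZ : LipschitzWith L Z) (hM : ‖Z 0‖ ≤ M)
    {t : ℝ} (ht : |t| ≤ 1) (x : E) : ‖f t x‖ ≤ exp L * (‖x‖ + M) := by
  have hexp : exp (L * |t|) ≤ exp L := exp_le_exp.2 (mul_le_of_le_one_right L.2 ht)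
  have hdrift : ‖Z 0‖ * |t| ≤ M := (mul_le_of_le_one_right (norm_nonneg _) ht).trans hM
  calc ‖f t x‖ ≤ (‖x‖ + ‖Z 0‖ * |t|) * exp (L * |t|) := hf.norm_le hZ t x
    _ ≤ (‖x‖ + M) * exp L := by
        gcongr
        linarith [norm_nonneg x, (norm_nonneg (Z 0)).trans hM]
    _ = exp L * (‖x‖ + M) := mul_comm _ _

lemma norm_sub_le_of_abs_le_one (hf : IsFlow Z f) (hZ : LipschitzWith L Z) (hM : ‖Z 0‖ ≤ M)
    {a b : ℝ} (ha : |a| ≤ 1) (hb : |b| ≤ 1) (x : E) :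
    ‖f a x - f b x‖ ≤ (1 + L * exp L) * (‖x‖ + M) * |a - b| := by
  have hspeed : ∀ s ∈ Icc (-1 : ℝ) 1, ‖Z (f s x)‖ ≤ (1 + L * exp L) * (‖x‖ + M) := fun s hs => by
    have hfs := mul_le_mul_of_nonneg_left (hf.norm_le_of_abs_le_one hZ hM (abs_le.2 hs) x) L.2
    have hZfs := hZ.norm_sub_le (f s x) 0
    rw [sub_zero] at hZfs
    calc ‖Z (f s x)‖ ≤ ‖Z 0‖ + ‖Z (f s x) - Z 0‖ := norm_le_norm_add_norm_sub' _ _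
      _ ≤ M + L * (exp L * (‖x‖ + M)) := add_le_add hM (hZfs.trans hfs)
      _ ≤ (1 + L * exp L) * (‖x‖ + M) := by linarith [norm_nonneg x]
  simpa [Real.norm_eq_abs] using (convex_Icc (-1 : ℝ) 1).norm_image_sub_le_of_norm_hasDerivWithin_le
    (fun s _ => (hf.hasDerivAt s x).hasDerivWithinAt) hspeed (abs_le.1 hb) (abs_le.1 ha)

end IsFlow

end Flow

section FlowComp

variable {α : Type*} {k : ℕ}

lemma flowComp_succ (g : Fin (k + 1) → α → α) :
    flowComp g = g 0 ∘ flowComp (fun i => g i.succ) := by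
  simp [flowComp, List.ofFn_succ]

lemma flowComp_id : flowComp (fun _ : Fin k => (id : α → α)) = id := by
  induction k with
  | zero => simp [flowComp]
  | succ k ih => rw [flowComp_succ, ih, Function.id_comp]

lemma Function.Surjective.flowComp {g : Fin k → α → α} (hg : ∀ i, (g i).Surjective) :
    (_root_.flowComp g).Surjective := by
  induction k with
  | zero => simpa [_root_.flowComp] using Function.surjective_id
  | succ k ih => rw [flowComp_succ]; exact (hg 0).comp (ih fun i => hg i.succ)

lemma map_flowComp_eq_add_sum {β : Type*} [AddCommMonoid β] (ℓ : α → β) {g : Fin k → α → α}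
    {v : Fin k → β} (hg : ∀ i x, ℓ (g i x) = ℓ x + v i) (x : α) :
    ℓ (flowComp g x) = ℓ x + ∑ i, v i := by
  induction k with
  | zero => simp [flowComp]
  | succ k ih =>
    rw [flowComp_succ, Function.comp_apply, hg, ih fun i => hg i.succ, Fin.sum_univ_succ,
      add_assoc, add_comm (v 0)]

lemma map_flowComp_le_pow_mul (ρ : α → ℝ) {g : Fin k → α → α} {c : ℝ} (hc : 0 ≤ c)
    (hg : ∀ i x, ρ (g i x) ≤ c * ρ x) (x : α) : ρ (flowComp g x) ≤ c ^ k * ρ x := by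
  induction k with
  | zero => simp [flowComp]
  | succ k ih =>
    rw [flowComp_succ, Function.comp_apply, pow_succ', mul_assoc]
    exact (hg 0 _).trans (mul_le_mul_of_nonneg_left (ih fun i => hg i.succ) hc)

section PseudoEMetric

variable [PseudoEMetricSpace α] {K : ℝ≥0} {g : Fin k → α → α}

lemma LipschitzWith.flowComp (hg : ∀ i, LipschitzWith K (g i)) :
    LipschitzWith (K ^ k) (_root_.flowComp g) := by
  induction k with
  | zero => simpa [_root_.flowComp] using LipschitzWith.id
  | succ k ih => rw [flowComp_succ, pow_succ']; exact (hg 0).comp (ih fun i => hg i.succ)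

lemma AntilipschitzWith.flowComp (hg : ∀ i, AntilipschitzWith K (g i)) :
    AntilipschitzWith (K ^ k) (_root_.flowComp g) := by
  induction k with
  | zero => simpa [_root_.flowComp] using AntilipschitzWith.id
  | succ k ih => rw [flowComp_succ, pow_succ]; exact (hg 0).comp (ih fun i => hg i.succ)

end PseudoEMetric

lemma norm_flowComp_sub_flowComp_le [SeminormedAddCommGroup α] {g h : Fin k → α → α}
    {ρ : α → ℝ} {c d : ℝ} (hc : 1 ≤ c) (hd : 0 ≤ d) (hρ : ∀ x, 0 ≤ ρ x)
    (hg : ∀ i x y, ‖g i x - g i y‖ ≤ c * ‖x - y‖) (hh : ∀ i x, ρ (h i x) ≤ c * ρ x)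
    (hgh : ∀ i x, ‖g i x - h i x‖ ≤ d * ρ x) (x : α) :
    ‖flowComp g x - flowComp h x‖ ≤ k * c ^ k * d * ρ x := by
  induction k with
  | zero => simp [flowComp]
  | succ k ih =>
    simp only [flowComp_succ, Function.comp_apply]
    set A := flowComp (fun i => g i.succ) x
    set B := flowComp (fun i => h i.succ) x
    have hAB : ‖A - B‖ ≤ k * c ^ k * d * ρ x :=
      ih (fun i => hg i.succ) (fun i => hh i.succ) (fun i => hgh i.succ)
    have hB : d * ρ B ≤ c ^ k * (d * ρ x) := by
      rw [mul_left_comm]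
      exact mul_le_mul_of_nonneg_left (map_flowComp_le_pow_mul ρ (by linarith)
        (fun i => hh i.succ) x) hd
    have hpow : c ^ k * (d * ρ x) ≤ c ^ (k + 1) * (d * ρ x) :=
      mul_le_mul_of_nonneg_right (pow_le_pow_right₀ hc k.le_succ) (mul_nonneg hd (hρ x))
    calc ‖g 0 A - h 0 B‖ ≤ ‖g 0 A - g 0 B‖ + ‖g 0 B - h 0 B‖ :=
          norm_sub_le_norm_sub_add_norm_sub _ _ _
      _ ≤ c * ‖A - B‖ + d * ρ B := add_le_add (hg 0 A B) (hgh 0 B)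
      _ ≤ c * (k * c ^ k * d * ρ x) + c ^ (k + 1) * (d * ρ x) :=
          add_le_add (mul_le_mul_of_nonneg_left hAB (by linarith)) (hB.trans hpow)
      _ = (k + 1 : ℕ) * c ^ (k + 1) * d * ρ x := by push_cast; ring

end FlowComp

section FlowBox

variable {A B : Type*} [NormedAddCommGroup A] [NormedAddCommGroup B]

def flowBox (Φ : A → A × B → A × B) (p : A × B) : A × B := Φ p.1 (0, p.2)

/-- `Φ t` stands for `𝓕^{t₁}_{Y₁} ∘ ⋯ ∘ 𝓕^{t_k}_{Y_k}`. -/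
structure IsFlowBoxFamily (Φ : A → A × B → A × B) (c K : ℝ≥0) : Prop where
  one_le : 1 ≤ c
  fst_apply : ∀ t x, (Φ t x).1 = x.1 + t
  apply_zero_zero : Φ 0 0 = 0
  surjective : ∀ t, Function.Surjective (Φ t)
  lipschitzWith : ∀ t, ‖t‖ ≤ 1 → LipschitzWith c (Φ t)
  antilipschitzWith : ∀ t, ‖t‖ ≤ 1 → AntilipschitzWith c (Φ t)
  norm_apply_sub_apply_le :
    ∀ t s x, ‖t‖ ≤ 1 → ‖s‖ ≤ 1 → ‖x‖ ≤ 1 → ‖Φ t x - Φ s x‖ ≤ K * ‖t - s‖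

lemma norm_zero_snd_le (p : A × B) : ‖((0 : A), p.2)‖ ≤ ‖p‖ := by
  simp [Prod.norm_def]

namespace IsFlowBoxFamily

variable {Φ : A → A × B → A × B} {c K : ℝ≥0}

lemma one_le_mul_one_add (h : IsFlowBoxFamily Φ c K) : (1 : ℝ) ≤ c * (1 + K) :=
  one_le_mul_of_one_le_of_one_le h.one_le (by simp)

lemma fst_flowBox (h : IsFlowBoxFamily Φ c K) (p : A × B) : (flowBox Φ p).1 = p.1 := by
  simp [flowBox, h.fst_apply]

lemma flowBox_zero (h : IsFlowBoxFamily Φ c K) : flowBox Φ 0 = 0 :=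
  h.apply_zero_zero

lemma norm_flowBox_sub_le (h : IsFlowBoxFamily Φ c K) {p q : A × B} (hp : ‖p‖ ≤ 1)
    (hq : ‖q‖ ≤ 1) : ‖flowBox Φ p - flowBox Φ q‖ ≤ (c + K) * ‖p - q‖ := by
  have hp₁ : ‖p.1‖ ≤ 1 := (norm_fst_le p).trans hp
  calc ‖Φ p.1 (0, p.2) - Φ q.1 (0, q.2)‖
      ≤ ‖Φ p.1 (0, p.2) - Φ p.1 (0, q.2)‖ + ‖Φ p.1 (0, q.2) - Φ q.1 (0, q.2)‖ :=
        norm_sub_le_norm_sub_add_norm_sub _ _ _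
    _ ≤ c * ‖((0 : A), (p - q).2)‖ + K * ‖p.1 - q.1‖ := by
        gcongr
        · simpa using (h.lipschitzWith p.1 hp₁).norm_sub_le (0, p.2) (0, q.2)
        · exact h.norm_apply_sub_apply_le _ _ _ hp₁ ((norm_fst_le q).trans hq)
            ((norm_zero_snd_le q).trans hq)
    _ ≤ c * ‖p - q‖ + K * ‖p - q‖ := by
        gcongr
        exacts [norm_zero_snd_le _, norm_fst_le (p - q)]
    _ = (c + K) * ‖p - q‖ := by ring

/-- The first coordinate is read off directly, the second one by undoing `Φ p.1`. -/
lemma norm_sub_le_flowBox (h : IsFlowBoxFamily Φ c K) {p q : A × B} (hp : ‖p‖ ≤ 1)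
    (hq : ‖q‖ ≤ 1) : ‖p - q‖ ≤ c * (1 + K) * ‖flowBox Φ p - flowBox Φ q‖ := by
  set D := ‖flowBox Φ p - flowBox Φ q‖
  have hp₁ : ‖p.1‖ ≤ 1 := (norm_fst_le p).trans hp
  have hfst : ‖p.1 - q.1‖ ≤ D := by
    simpa [h.fst_flowBox] using norm_fst_le (flowBox Φ p - flowBox Φ q)
  have hsnd : ‖p.2 - q.2‖ ≤ c * (D + K * ‖p.1 - q.1‖) := by
    calc ‖p.2 - q.2‖ = ‖((0 : A), p.2) - (0, q.2)‖ := by simp [Prod.norm_def]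
      _ ≤ c * ‖Φ p.1 (0, p.2) - Φ p.1 (0, q.2)‖ := by
          simpa [dist_eq_norm] using (h.antilipschitzWith p.1 hp₁).le_mul_dist (0, p.2) (0, q.2)
      _ ≤ c * (D + ‖Φ q.1 (0, q.2) - Φ p.1 (0, q.2)‖) := by
          gcongr
          exact norm_sub_le_norm_sub_add_norm_sub _ _ _
      _ ≤ c * (D + K * ‖p.1 - q.1‖) := by
          gcongr
          rw [norm_sub_rev p.1]
          exact h.norm_apply_sub_apply_le _ _ _ ((norm_fst_le q).trans hq) hp₁
            ((norm_zero_snd_le q).trans hq)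
  rw [Prod.norm_def, Prod.fst_sub, Prod.snd_sub]
  refine max_le (hfst.trans (le_mul_of_one_le_left (norm_nonneg _) h.one_le_mul_one_add))
    (hsnd.trans ?_)
  calc c * (D + K * ‖p.1 - q.1‖) ≤ c * (D + K * D) := by gcongr
    _ = c * (1 + K) * D := by ring

/-- Solving `Φ y.1 x = y` puts `x` on the transversal `{0} × B`. -/
lemma exists_flowBox_eq (h : IsFlowBoxFamily Φ c K) {y : A × B}
    (hy : c * (1 + K) * ‖y‖ < 1) : ∃ p, ‖p‖ < 1 ∧ flowBox Φ p = y := by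
  have hy' : ‖y‖ < 1 := by nlinarith [norm_nonneg y, h.one_le_mul_one_add]
  have ht : ‖y.1‖ ≤ 1 := ((norm_fst_le y).trans hy'.le)
  obtain ⟨x, hxy⟩ := h.surjective y.1 y
  have hx₁ : x.1 = 0 := by simpa [hxy] using (h.fst_apply y.1 x).symm
  have hx : ‖x‖ ≤ c * (1 + K) * ‖y‖ := by
    calc ‖x‖ = ‖x - 0‖ := by rw [sub_zero]
      _ ≤ c * ‖Φ y.1 x - Φ y.1 0‖ := by
          simpa [dist_eq_norm] using (h.antilipschitzWith y.1 ht).le_mul_dist x 0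
      _ ≤ c * (‖y‖ + ‖Φ y.1 0 - Φ 0 0‖) := by
          rw [hxy, h.apply_zero_zero, sub_zero]
          gcongr
          exact norm_sub_le y (Φ y.1 0)
      _ ≤ c * (‖y‖ + K * ‖y‖) := by
          gcongr
          simpa using (h.norm_apply_sub_apply_le y.1 0 0 ht (by simp) (by simp)).trans
            (mul_le_mul_of_nonneg_left (by simpa using norm_fst_le y) K.2)
      _ = c * (1 + K) * ‖y‖ := by ring
  refine ⟨(y.1, x.2), ?_, ?_⟩
  · rw [Prod.norm_def]
    exact max_lt ((norm_fst_le y).trans_lt hy') (((norm_snd_le x).trans hx).trans_lt hy)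
  · rw [flowBox, ← hx₁, hxy]

theorem exists_bijOn_biLipschitz (h : IsFlowBoxFamily Φ c K) :
    ∃ U₀ U₁ : Set (A × B), IsOpen U₀ ∧ (0 : A × B) ∈ U₀ ∧ IsOpen U₁ ∧ (0 : A × B) ∈ U₁ ∧
      ∃ C : ℝ, 1 ≤ C ∧ BijOn (flowBox Φ) U₀ U₁ ∧ ∀ p ∈ U₀, ∀ q ∈ U₀,
        C⁻¹ * ‖p - q‖ ≤ ‖flowBox Φ p - flowBox Φ q‖ ∧
          ‖flowBox Φ p - flowBox Φ q‖ ≤ C * ‖p - q‖ := by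
  set C : ℝ := c * (1 + K)
  have hC : 1 ≤ C := h.one_le_mul_one_add
  have hcont : ContinuousOn (flowBox Φ) (Metric.ball 0 1) :=
    LipschitzOnWith.continuousOn (K := c + K) <| LipschitzOnWith.of_dist_le_mul
      fun p hp q hq => by
        simpa [dist_eq_norm] using h.norm_flowBox_sub_le (mem_ball_zero_iff.1 hp).le
          (mem_ball_zero_iff.1 hq).le
  refine ⟨Metric.ball 0 1 ∩ flowBox Φ ⁻¹' Metric.ball 0 C⁻¹, Metric.ball 0 C⁻¹,
    hcont.isOpen_inter_preimage Metric.isOpen_ball Metric.isOpen_ball, ?_, Metric.isOpen_ball,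
    by simp; linarith, C, hC, ⟨fun p hp => hp.2, ?_, ?_⟩, ?_⟩
  · simp [h.flowBox_zero]; linarith
  · intro p hp q hq hpq
    have := h.norm_sub_le_flowBox (mem_ball_zero_iff.1 hp.1).le (mem_ball_zero_iff.1 hq.1).le
    rw [hpq, sub_self, norm_zero, mul_zero] at this
    exact sub_eq_zero.1 (norm_le_zero_iff.1 this)
  · intro y hy
    have hCy : C * ‖y‖ < 1 :=
      (lt_inv_mul_iff₀ (by positivity)).1 (by rw [mul_one]; exact mem_ball_zero_iff.1 hy)
    obtain ⟨p, hp, rfl⟩ := h.exists_flowBox_eq hCy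
    exact ⟨p, ⟨mem_ball_zero_iff.2 hp, hy⟩, rfl⟩
  · intro p hp q hq
    have hp' := (mem_ball_zero_iff.1 hp.1).le
    have hq' := (mem_ball_zero_iff.1 hq.1).le
    refine ⟨(inv_mul_le_iff₀ (by positivity)).2 (h.norm_sub_le_flowBox hp' hq'),
      (h.norm_flowBox_sub_le hp' hq').trans ?_⟩
    gcongr
    nlinarith [h.one_le, K.2]

end IsFlowBoxFamily

end FlowBox

section FlowsOfFields

variable {k : ℕ} {E : Type*} [NormedAddCommGroup E] [NormedSpace ℝ E] {L : ℝ≥0}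
  {Y : Fin k → E → E} {F : Fin k → ℝ → E → E}

lemma EuclideanSpace.abs_apply_le_norm (t : EuclideanSpace ℝ (Fin k)) (i : Fin k) :
    |t i| ≤ ‖t‖ :=
  PiLp.norm_apply_le t i

lemma norm_flowComp_sub_flowComp_le_of_isFlow (hY : ∀ i, LipschitzWith L (Y i))
    (hF : ∀ i, IsFlow (Y i) (F i)) {M : ℝ} (hM₀ : 0 ≤ M) (hM : ∀ i, ‖Y i 0‖ ≤ M)
    {t s : EuclideanSpace ℝ (Fin k)} (ht : ‖t‖ ≤ 1) (hs : ‖s‖ ≤ 1) (x : E) :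
    ‖flowComp (fun i => F i (t i)) x - flowComp (fun i => F i (s i)) x‖ ≤
      k * (exp L + 1) ^ k * ((1 + L * exp L) * ‖t - s‖) * (‖x‖ + M) := by
  have hti : ∀ i, |t i| ≤ 1 := fun i => (EuclideanSpace.abs_apply_le_norm t i).trans ht
  have hsi : ∀ i, |s i| ≤ 1 := fun i => (EuclideanSpace.abs_apply_le_norm s i).trans hs
  refine norm_flowComp_sub_flowComp_le (ρ := fun x => ‖x‖ + M) (c := exp L + 1)
    (by linarith [exp_pos L]) (by positivity)
    (fun x => by positivity) (fun i x y => ?_) (fun i x => ?_) (fun i x => ?_) x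
  · calc ‖F i (t i) x - F i (t i) y‖ ≤ exp L * ‖x - y‖ := by
          simpa [coe_toNNReal _ (exp_pos _).le] using
            ((hF i).lipschitzWith_of_abs_le_one (hY i) (hti i)).norm_sub_le x y
      _ ≤ (exp L + 1) * ‖x - y‖ := by gcongr; linarith
  · have := (hF i).norm_le_of_abs_le_one (hY i) (hM i) (hsi i) x
    nlinarith [norm_nonneg x, exp_pos L]
  · calc ‖F i (t i) x - F i (s i) x‖ ≤ (1 + L * exp L) * (‖x‖ + M) * |t i - s i| :=
          (hF i).norm_sub_le_of_abs_le_one (hY i) (hM i) (hti i) (hsi i) x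
      _ ≤ (1 + L * exp L) * (‖x‖ + M) * ‖t - s‖ := by
          gcongr
          exact EuclideanSpace.abs_apply_le_norm (t - s) i
      _ = _ := by ring

lemma fst_flowComp_of_isFlow {B : Type*} [NormedAddCommGroup B] [NormedSpace ℝ B]
    {Y : Fin k → EuclideanSpace ℝ (Fin k) × B → EuclideanSpace ℝ (Fin k) × B}
    {F : Fin k → ℝ → EuclideanSpace ℝ (Fin k) × B → EuclideanSpace ℝ (Fin k) × B}
    (hform : ∀ i x, (Y i x).1 = EuclideanSpace.single i 1) (hF : ∀ i, IsFlow (Y i) (F i))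
    (t : EuclideanSpace ℝ (Fin k)) (x : EuclideanSpace ℝ (Fin k) × B) :
    (flowComp (fun i => F i (t i)) x).1 = x.1 + t := by
  have hstep : ∀ i x, (F i (t i) x).1 = x.1 + EuclideanSpace.single i (t i) := fun i x => by
    rw [show EuclideanSpace.single i (t i) = t i • EuclideanSpace.single i 1 by ext; simp]
    exact (hF i).map_apply (.fst ℝ _ _) (hform i) (t i) x
  rw [map_flowComp_eq_add_sum Prod.fst hstep]
  congr 1
  ext; simp

theorem exists_isFlowBoxFamily_flowComp {B : Type*} [NormedAddCommGroup B] [NormedSpace ℝ B]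
    {Y : Fin k → EuclideanSpace ℝ (Fin k) × B → EuclideanSpace ℝ (Fin k) × B}
    {F : Fin k → ℝ → EuclideanSpace ℝ (Fin k) × B → EuclideanSpace ℝ (Fin k) × B}
    (hY : ∀ i, LipschitzWith L (Y i)) (hform : ∀ i x, (Y i x).1 = EuclideanSpace.single i 1)
    (hF : ∀ i, IsFlow (Y i) (F i)) :
    ∃ c K, IsFlowBoxFamily
      (fun t : EuclideanSpace ℝ (Fin k) => flowComp fun i => F i (t i)) c K := by
  set M := ∑ i, ‖Y i 0‖
  have hM : ∀ i, ‖Y i 0‖ ≤ M := fun i =>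
    Finset.single_le_sum (fun j _ => norm_nonneg (Y j 0)) (Finset.mem_univ i)
  have hM₀ : 0 ≤ M := Finset.sum_nonneg fun j _ => norm_nonneg (Y j 0)
  set K := k * (exp L + 1) ^ k * (1 + L * exp L) * (1 + M)
  refine ⟨(exp L).toNNReal ^ k, K.toNNReal, ⟨?_, fst_flowComp_of_isFlow hform hF, ?_,
    fun t => Function.Surjective.flowComp fun i => (hF i).surjective (hY i) _,
    fun t ht => LipschitzWith.flowComp fun i => (hF i).lipschitzWith_of_abs_le_one (hY i)
      ((EuclideanSpace.abs_apply_le_norm t i).trans ht),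
    fun t ht => AntilipschitzWith.flowComp fun i => (hF i).antilipschitzWith_of_abs_le_one (hY i)
      ((EuclideanSpace.abs_apply_le_norm t i).trans ht),
    fun t s x ht hs hx => ?_⟩⟩
  · exact one_le_pow₀ (by simp)
  · have hid : (fun i => F i ((0 : EuclideanSpace ℝ (Fin k)) i)) = fun _ => id :=
      funext fun i => funext (hF i).apply_zero
    simp only [hid, flowComp_id, id]
  · refine (norm_flowComp_sub_flowComp_le_of_isFlow hY hF hM₀ hM ht hs x).trans ?_
    rw [coe_toNNReal _ (by positivity)]
    have : ‖x‖ + M ≤ 1 + M := by linarith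
    calc _ = k * (exp L + 1) ^ k * (1 + L * exp L) * (‖x‖ + M) * ‖t - s‖ := by ring
      _ ≤ K * ‖t - s‖ := by simp only [K]; gcongr

end FlowsOfFields

theorem stmt_7_general {k m : ℕ}
    (Y : Fin k → (EuclideanSpace ℝ (Fin k) × EuclideanSpace ℝ (Fin m)) →
      (EuclideanSpace ℝ (Fin k) × EuclideanSpace ℝ (Fin m)))
    (L : NNReal) (hYlip : ∀ i, LipschitzWith L (Y i))
    (hform : ∀ i x, (Y i x).1 = EuclideanSpace.single i 1)
    (F : Fin k → ℝ → (EuclideanSpace ℝ (Fin k) × EuclideanSpace ℝ (Fin m)) →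
      (EuclideanSpace ℝ (Fin k) × EuclideanSpace ℝ (Fin m)))
    (hF0 : ∀ i x, F i 0 x = x)
    (hF : ∀ i t x, HasDerivAt (fun s => F i s x) (Y i (F i t x)) t)
    (G : (EuclideanSpace ℝ (Fin k) × EuclideanSpace ℝ (Fin m)) →
      (EuclideanSpace ℝ (Fin k) × EuclideanSpace ℝ (Fin m)))
    (hG : ∀ t : EuclideanSpace ℝ (Fin k), ∀ z : EuclideanSpace ℝ (Fin m),
      G (t, z) = flowComp (fun i => F i (t i)) ((0 : EuclideanSpace ℝ (Fin k)), z)) :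
    ∃ U₀ U₁ : Set (EuclideanSpace ℝ (Fin k) × EuclideanSpace ℝ (Fin m)),
      IsOpen U₀ ∧ (0 : EuclideanSpace ℝ (Fin k) × EuclideanSpace ℝ (Fin m)) ∈ U₀ ∧
      IsOpen U₁ ∧ (0 : EuclideanSpace ℝ (Fin k) × EuclideanSpace ℝ (Fin m)) ∈ U₁ ∧
      ∃ C : ℝ, 1 ≤ C ∧ Set.BijOn G U₀ U₁ ∧
        ∀ p ∈ U₀, ∀ q ∈ U₀,
          C⁻¹ * ‖p - q‖ ≤ ‖G p - G q‖ ∧ ‖G p - G q‖ ≤ C * ‖p - q‖ := by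
  obtain ⟨c, K, hΦ⟩ := exists_isFlowBoxFamily_flowComp hYlip hform fun i => ⟨hF0 i, hF i⟩
  obtain rfl : G = flowBox fun t => flowComp fun i => F i (t i) := funext fun p => hG p.1 p.2
  exact hΦ.exists_bijOn_biLipschitz

/-- **Proposition 2.3.** Write `ℝⁿ = ℝ^k × ℝ^{n−k}` (with `m = n − k ≥ 1`).  Let
`Y₁,…,Y_k` be globally Lipschitz vector fields of the form `Y_i = e_i + Y_i^#`, where
`Y_i^#(x) ∈ {0} × ℝ^{n−k}`, `Y_i^#(0) = 0`, and `[Y_i,Y_j] = 0` a.e.  Let `𝓕^t_{Y_i}` be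
the flow of `Y_i` and `G(t,z) = 𝓕^{t₁}_{Y₁} ∘ ⋯ ∘ 𝓕^{t_k}_{Y_k}(0,z)`.  Then there are open
neighborhoods `U₀` of `(0,0)` and `U₁` of `0` and `C ≥ 1` such that `G` maps `U₀`
bijectively onto `U₁` and `C⁻¹|p−q| ≤ |G(p)−G(q)| ≤ C|p−q|` on `U₀`. -/
theorem stmt_7 {k m : ℕ} (hk : 1 ≤ k) (hm : 1 ≤ m)
    (Y : Fin k → (EuclideanSpace ℝ (Fin k) × EuclideanSpace ℝ (Fin m)) →
      (EuclideanSpace ℝ (Fin k) × EuclideanSpace ℝ (Fin m)))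
    (L : NNReal) (hYlip : ∀ i, LipschitzWith L (Y i))
    (hform : ∀ i x, (Y i x).1 = EuclideanSpace.single i 1)
    (h0 : ∀ i, (Y i 0).2 = 0)
    (hcomm : ∀ᵐ x ∂(volume :
        Measure (EuclideanSpace ℝ (Fin k) × EuclideanSpace ℝ (Fin m))),
      ∀ i j : Fin k, fderiv ℝ (Y j) x (Y i x) - fderiv ℝ (Y i) x (Y j x) = 0)
    (F : Fin k → ℝ → (EuclideanSpace ℝ (Fin k) × EuclideanSpace ℝ (Fin m)) →
      (EuclideanSpace ℝ (Fin k) × EuclideanSpace ℝ (Fin m)))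
    (hF0 : ∀ i x, F i 0 x = x)
    (hF : ∀ i t x, HasDerivAt (fun s => F i s x) (Y i (F i t x)) t)
    (G : (EuclideanSpace ℝ (Fin k) × EuclideanSpace ℝ (Fin m)) →
      (EuclideanSpace ℝ (Fin k) × EuclideanSpace ℝ (Fin m)))
    (hG : ∀ t : EuclideanSpace ℝ (Fin k), ∀ z : EuclideanSpace ℝ (Fin m),
      G (t, z) = flowComp (fun i => F i (t i)) ((0 : EuclideanSpace ℝ (Fin k)), z)) :
    ∃ U₀ U₁ : Set (EuclideanSpace ℝ (Fin k) × EuclideanSpace ℝ (Fin m)),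
      IsOpen U₀ ∧ (0 : EuclideanSpace ℝ (Fin k) × EuclideanSpace ℝ (Fin m)) ∈ U₀ ∧
      IsOpen U₁ ∧ (0 : EuclideanSpace ℝ (Fin k) × EuclideanSpace ℝ (Fin m)) ∈ U₁ ∧
      ∃ C : ℝ, 1 ≤ C ∧ Set.BijOn G U₀ U₁ ∧
        ∀ p ∈ U₀, ∀ q ∈ U₀,
          C⁻¹ * ‖p - q‖ ≤ ‖G p - G q‖ ∧ ‖G p - G q‖ ≤ C * ‖p - q‖ :=
  stmt_7_general Y L hYlip hform F hF0 hF G hG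
end
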